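/- If p is a Labos prime with p = p_n and n ≥ 3, and m is the unique index with p_m < p/2 < p_{m+1}, then the open interval (2p_m, p) contains a prime (i.e., p satisfies Condition 4). -/

import Mathlib

/-!
If no prime lay in `(2 p_m, p)`, then `L = 2 p_m - 1 < p` would satisfy
`π(L) = π(p) - 1` (the even number `2 p_m` is not prime) and
`π(⌊L/2⌋) = π(p_m - 1) = π(⌊p/2⌋) - 1` (no prime lies in `(p_m, p/2)`), so
`π(L) - π(⌊L/2⌋) = π(p) - π(⌊p/2⌋)`, contradicting the minimality of the Labos prime `p`.
-/

/-- `nthPrime n` is the n-th prime with 1-based indexing: p_1 = 2, p_2 = 3, ... -/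
noncomputable def nthPrime (n : ℕ) : ℕ := Nat.nth Nat.Prime (n - 1)

/-- The n-th Labos prime: the smallest positive integer L with
π(L) − π(⌊L/2⌋) = n. -/
noncomputable def labos (n : ℕ) : ℕ :=
  sInf {L : ℕ | 0 < L ∧ Nat.primeCounting L - Nat.primeCounting (L / 2) = n}

/-- A Labos prime is a number of the form L_n for some n ≥ 1. -/
def IsLabosPrime (p : ℕ) : Prop := ∃ n : ℕ, 1 ≤ n ∧ p = labos n

open scoped Nat.Prime

lemma Nat.primeCounting_succ (n : ℕ) : π (n + 1) = π n + if (n + 1).Prime then 1 else 0 :=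
  Nat.count_succ _ _

lemma Nat.primeCounting_eq_of_prime {p : ℕ} (hp : p.Prime) : π p = π (p - 1) + 1 := by
  obtain ⟨n, rfl⟩ : ∃ n, p = n + 1 := ⟨p - 1, by have := hp.one_lt; omega⟩
  simp [Nat.primeCounting_succ, hp]

lemma Nat.primeCounting_eq_of_forall_not_prime {a b : ℕ} (hab : a ≤ b)
    (h : ∀ q, a < q → q ≤ b → ¬ q.Prime) : π b = π a := by
  induction b, hab using Nat.le_induction with
  | base => rfl
  | succ b hab ih =>
    rw [Nat.primeCounting_succ, if_neg (h _ (by omega) le_rfl),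
      ih fun q h₁ h₂ => h q h₁ (by omega), add_zero]

lemma nthPrime_prime (n : ℕ) : (nthPrime n).Prime :=
  Nat.prime_nth_prime _

lemma not_prime_of_nthPrime_lt_of_lt_nthPrime_succ {k q : ℕ} (h₁ : nthPrime k < q)
    (h₂ : q < nthPrime (k + 1)) : ¬ q.Prime := by
  intro hq
  cases k with
  -- `nthPrime 0 = nthPrime 1 = 2` because of truncated subtraction, so this case is vacuous.
  | zero => exact absurd h₂ (by simpa [nthPrime] using h₁.le.not_gt)
  | succ k => exact (Nat.le_nth_of_lt_nth_succ h₂ hq).not_gt h₁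

lemma labos_le {n L : ℕ} (hL : 0 < L) (h : π L - π (L / 2) = n) : labos n ≤ L :=
  Nat.sInf_le ⟨hL, h⟩

lemma primeCounting_sub_primeCounting_half_labos {n : ℕ} (h : 0 < labos n) :
    π (labos n) - π (labos n / 2) = n := by
  have hne : {L : ℕ | 0 < L ∧ π L - π (L / 2) = n}.Nonempty := by
    by_contra hempty
    rw [Set.not_nonempty_iff_eq_empty] at hempty
    simp [labos, hempty] at h
  exact (Nat.sInf_mem hne).2

lemma IsLabosPrime.le_of_primeCounting_sub_eq {p L : ℕ} (hlab : IsLabosPrime p) (hp : 0 < p)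
    (hL : 0 < L) (h : π L - π (L / 2) = π p - π (p / 2)) : p ≤ L := by
  obtain ⟨n, -, rfl⟩ := hlab
  rw [primeCounting_sub_primeCounting_half_labos hp] at h
  exact labos_le hL h

theorem labos_satisfies_condition4_general (p n m : ℕ)
    (hp : p = nthPrime n) (hlab : IsLabosPrime p)
    (hm1 : 2 * nthPrime m < p) (hm2 : p < 2 * nthPrime (m + 1)) :
    ∃ q : ℕ, q.Prime ∧ 2 * nthPrime m < q ∧ q < p := by
  by_contra! hgap
  set a := nthPrime m
  have ha : a.Prime := nthPrime_prime m
  have hpprime : p.Prime := hp ▸ nthPrime_prime n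
  have ha2 : 2 ≤ a := ha.two_le
  have h2a : ¬ (2 * a).Prime := Nat.not_prime_mul (by omega) (by omega)
  have hhalf : π (p / 2) = π a := Nat.primeCounting_eq_of_forall_not_prime (by omega)
    fun q h₁ h₂ => not_prime_of_nthPrime_lt_of_lt_nthPrime_succ h₁ (by omega)
  have hbelow : π (p - 1) = π (2 * a - 1) := Nat.primeCounting_eq_of_forall_not_prime (by omega)
    fun q h₁ h₂ hq => by
      rcases (show q = 2 * a ∨ 2 * a < q by omega) with rfl | hq'
      · exact h2a hq
      · exact absurd (hgap q hq hq') (by omega)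
  have hle : p ≤ 2 * a - 1 := hlab.le_of_primeCounting_sub_eq hpprime.pos (by omega) <| by
    rw [show (2 * a - 1) / 2 = a - 1 by omega, ← hbelow, hhalf,
      Nat.primeCounting_eq_of_prime hpprime, Nat.primeCounting_eq_of_prime ha]
    omega
  omega

/-- If p is a Labos prime with p = p_n, n ≥ 3, and m is the unique index with
p_m < p/2 < p_{m+1}, then the open interval (2p_m, p) contains a prime
(Condition 4). -/
theorem labos_satisfies_condition4 (p n m : ℕ) (hn : 3 ≤ n) (hm : 1 ≤ m)
    (hp : p = nthPrime n) (hlab : IsLabosPrime p)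
    (hm1 : 2 * nthPrime m < p) (hm2 : p < 2 * nthPrime (m + 1)) :
    ∃ q : ℕ, q.Prime ∧ 2 * nthPrime m < q ∧ q < p :=
  labos_satisfies_condition4_general p n m hp hlab hm1 hm2
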